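/- arXiv:1502.06522 — 2 statements merged into one kernel-verified Lean document; each statement's English description precedes it below -/
import Mathlib

section
/- Let i : N → P be the inclusion of a coreflective full subcategory with right adjoint u : P → N, where both N and P are bicomplete. Suppose there are sets I, J of morphisms of N such that P is a cofibrantly generated model category with generating cofibrations iI, generating acyclic cofibrations iJ, weak equivalences W, and fibrations F. Then N admits a cofibrantly generated model structure with generating cofibrations I, generating acyclic cofibrations J, weak equivalences W ∩ N, and fibrations F ∩ N. -/
open CategoryTheory CategoryTheory.Limits

universe v u v' u'

variable {M : Type u} [Category.{v} M]

/-- `f` is a pushout (cobase change) of some morphism belonging to the class `K`. -/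
def IsPushoutOfClass (K : MorphismProperty M) {X Y : M} (f : X ⟶ Y) : Prop :=
  ∃ (A B : M) (k : A ⟶ B) (u : A ⟶ X) (v : B ⟶ Y), K k ∧ IsPushout u k f v

/-- A witness that `f : X ⟶ Y` is a transfinite composition of pushouts of morphisms
in `K`, i.e. a `K`-cell complex: there is a well-ordered diagram `F`, starting at `X`,
continuous at limit stages, whose successor maps are pushouts of maps in `K`, and whose
transfinite composite (the component of the colimit at the bottom) is `f`. -/
structure TransfiniteCompositionOfPushouts (K : MorphismProperty M) {X Y : M}
    (f : X ⟶ Y) where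
  J : Type v
  [linOrd : LinearOrder J]
  [wellFounded : WellFoundedLT J]
  [orderBot : OrderBot J]
  [succOrder : SuccOrder J]
  F : J ⥤ M
  isoBot : F.obj ⊥ ≅ X
  cocone : Cocone F
  isColimit : IsColimit cocone
  isoTop : cocone.pt ≅ Y
  fac : f = isoBot.inv ≫ cocone.ι.app ⊥ ≫ isoTop.hom
  succ_pushout : ∀ j : J, ¬ IsMax j →
    IsPushoutOfClass K (F.map (homOfLE (Order.le_succ j)))
  smooth : ∀ j : J, Order.IsSuccLimit j →
    Nonempty (IsColimit (Cocone.mk (F.obj j)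
      { app := fun x : Set.Iio j =>
          F.map (homOfLE (le_of_lt x.2) : (x : J) ⟶ j)
        naturality := by
          intro a b g
          dsimp
          rw [Category.comp_id]
          exact (F.map_comp _ _).symm } :
        Cocone ((Monotone.functor (f := fun x : Set.Iio j => (x : J))
          (fun _ _ h => h)) ⋙ F)))

/-- A morphism is a `K`-cell complex if it admits such a witness. -/
def IsCellComplex (K : MorphismProperty M) : MorphismProperty M :=
  fun _ _ f => Nonempty (TransfiniteCompositionOfPushouts.{v} K f)

/-- The class of morphisms with the right lifting property against all members of `K`. -/
def rlp (K : MorphismProperty M) : MorphismProperty M :=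
  fun _ _ f => ∀ ⦃A B : M⦄ (k : A ⟶ B), K k → HasLiftingProperty k f

/-- The class of morphisms with the left lifting property against all members of `K`. -/
def llp (K : MorphismProperty M) : MorphismProperty M :=
  fun _ _ f => ∀ ⦃A B : M⦄ (k : A ⟶ B), K k → HasLiftingProperty f k

/-- An object `A` is (sequentially) small relative to a class `K`: maps from `A` into the
colimit of an `ℕ`-indexed chain with structure maps in `K` factor, essentially uniquely,
through some stage (the paper's notion of `finite`/small objects). -/
def SeqSmallRel (A : M) (K : MorphismProperty M) : Prop :=
  ∀ (F : ℕ ⥤ M), (∀ n : ℕ, K (F.map (homOfLE (Nat.le_succ n)))) →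
    ∀ (c : Cocone F), IsColimit c →
      (∀ g : A ⟶ c.pt, ∃ (n : ℕ) (h : A ⟶ F.obj n), h ≫ c.ι.app n = g) ∧
      (∀ (n : ℕ) (h₁ h₂ : A ⟶ F.obj n), h₁ ≫ c.ι.app n = h₂ ≫ c.ι.app n →
        ∃ (m : ℕ) (le : n ≤ m), h₁ ≫ F.map (homOfLE le) = h₂ ≫ F.map (homOfLE le))

/-- `f` is a retract of `g` in the arrow category. -/
def IsRetractOfArrow {X Y X' Y' : M} (f : X ⟶ Y) (g : X' ⟶ Y') : Prop :=
  ∃ (i : X ⟶ X') (r : X' ⟶ X) (i' : Y ⟶ Y') (r' : Y' ⟶ Y),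
    i ≫ r = 𝟙 X ∧ i' ≫ r' = 𝟙 Y ∧ i ≫ g = f ≫ i' ∧ g ≫ r' = r ≫ f

/-- The category `M` carries a cofibrantly generated model structure with weak
equivalences `W`, generating cofibrations `I` and generating acyclic cofibrations `J`.
The fibrations are `rlp J`, the cofibrations are `llp (rlp I)`, the acyclic fibrations
are `rlp I` and the acyclic cofibrations are `llp (rlp J)`; the axioms below express
the two-out-of-three property, closure of `W` under retracts, smallness of the domains
of `I` and `J` relative to cell complexes, the compatibilities of the (co)fibrations
with `W`, and the two factorization axioms.  The lifting axioms hold automatically by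
the definitions of `rlp` and `llp`. -/
structure IsCofibrantlyGeneratedModel (W I J : MorphismProperty M) : Prop where
  two_of_three_comp : ∀ {X Y Z : M} (f : X ⟶ Y) (g : Y ⟶ Z), W f → W g → W (f ≫ g)
  two_of_three_left : ∀ {X Y Z : M} (f : X ⟶ Y) (g : Y ⟶ Z), W g → W (f ≫ g) → W f
  two_of_three_right : ∀ {X Y Z : M} (f : X ⟶ Y) (g : Y ⟶ Z), W f → W (f ≫ g) → W g
  retract : ∀ {X Y X' Y' : M} (f : X ⟶ Y) (g : X' ⟶ Y'),
    IsRetractOfArrow f g → W g → W f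
  small_I : ∀ {A B : M} (k : A ⟶ B), I k → SeqSmallRel A (IsCellComplex.{v} I)
  small_J : ∀ {A B : M} (k : A ⟶ B), J k → SeqSmallRel A (IsCellComplex.{v} J)
  rlp_I : ∀ {X Y : M} (f : X ⟶ Y), rlp I f ↔ (W f ∧ rlp J f)
  llp_J : ∀ {X Y : M} (f : X ⟶ Y), llp (rlp J) f ↔ (W f ∧ llp (rlp I) f)
  fact_cof : ∀ {X Y : M} (f : X ⟶ Y),
    ∃ (Z : M) (i : X ⟶ Z) (p : Z ⟶ Y), llp (rlp I) i ∧ rlp I p ∧ i ≫ p = f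
  fact_acof : ∀ {X Y : M} (f : X ⟶ Y),
    ∃ (Z : M) (i : X ⟶ Z) (p : Z ⟶ Y), llp (rlp J) i ∧ rlp J p ∧ i ≫ p = f

/-!
Lifting problems, weak equivalences and retracts between objects of `N` transfer along the fully
faithful functor `i`, and smallness transfers because the left adjoint `i` preserves the colimits
defining cell complexes. For the factorizations, factor `i f = g ≫ p` in `P`. The counit
`ε_Z : i (u Z) ⟶ Z` has the right lifting property against `i K` since `u ε_Z` is invertible, so
lifting the cofibration `g` against it gives a section of `ε_Z`; as `i` is fully faithful, this
forces `ε_Z` to be an isomorphism, hence `Z` lies in `N` and the factorization descends.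
-/

lemma IsRetractOfArrow.map {M' : Type*} [Category* M'] (F : M ⥤ M') {X Y X' Y' : M}
    {f : X ⟶ Y} {g : X' ⟶ Y'} (h : IsRetractOfArrow f g) :
    IsRetractOfArrow (F.map f) (F.map g) := by
  obtain ⟨a, r, a', r', hr, hr', ha, hr''⟩ := h
  refine ⟨F.map a, F.map r, F.map a', F.map r', ?_, ?_, ?_, ?_⟩ <;>
    simp only [← F.map_comp, hr, hr', ha, hr'', F.map_id]

section Transfer

variable {N : Type u} {P : Type u'} [Category.{v} N] [Category.{v} P]

lemma CategoryTheory.Functor.hasLiftingProperty_map_iff (i : N ⥤ P) [i.Full] [i.Faithful]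
    {A B X Y : N} (k : A ⟶ B) (q : X ⟶ Y) :
    HasLiftingProperty (i.map k) (i.map q) ↔ HasLiftingProperty k q := by
  refine ⟨fun _ => ⟨fun {f g} sq => ?_⟩, fun _ => ⟨fun {f g} sq => ?_⟩⟩
  · have sq' : CommSq (i.map f) (i.map k) (i.map q) (i.map g) := sq.map i
    exact ⟨⟨⟨i.preimage sq'.lift,
      i.map_injective (by rw [i.map_comp, i.map_preimage, sq'.fac_left]),
      i.map_injective (by rw [i.map_comp, i.map_preimage, sq'.fac_right])⟩⟩⟩
  · have sq' : CommSq (i.preimage f) k q (i.preimage g) :=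
      ⟨i.map_injective (by simp only [i.map_comp, i.map_preimage, sq.w])⟩
    exact ⟨⟨⟨i.map sq'.lift,
      by rw [← i.map_comp, sq'.fac_left, i.map_preimage],
      by rw [← i.map_comp, sq'.fac_right, i.map_preimage]⟩⟩⟩

lemma rlp_map_iff (i : N ⥤ P) [i.Full] [i.Faithful] (K : MorphismProperty N)
    {X Y : N} (q : X ⟶ Y) : rlp K q ↔ rlp (K.map i) (i.map q) := by
  refine ⟨?_, fun h A B k hk =>
    (i.hasLiftingProperty_map_iff k q).1 (h _ (K.map_mem_map i k hk))⟩
  rintro h _ _ _ ⟨A, B, k, hk, ⟨e⟩⟩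
  have := (i.hasLiftingProperty_map_iff k q).2 (h k hk)
  exact HasLiftingProperty.of_arrow_iso_left e (i.map q)

lemma llp_rlp_map_iff (i : N ⥤ P) [i.Full] [i.Faithful] {u : P ⥤ N} (adj : i ⊣ u)
    (K : MorphismProperty N) {X Y : N} (f : X ⟶ Y) :
    llp (rlp K) f ↔ llp (rlp (K.map i)) (i.map f) := by
  refine ⟨fun h A B p hp => ?_, fun h A B q hq =>
    (i.hasLiftingProperty_map_iff f q).1 (h _ ((rlp_map_iff i K q).1 hq))⟩
  rw [adj.hasLiftingProperty_iff]
  exact h _ fun A' B' k hk => (adj.hasLiftingProperty_iff k p).1 (hp _ (K.map_mem_map i k hk))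

lemma CategoryTheory.Adjunction.rlp_map_counit_app {i : N ⥤ P} [i.Full] [i.Faithful]
    {u : P ⥤ N} (adj : i ⊣ u) (K : MorphismProperty N) (Z : P) :
    rlp (K.map i) (adj.counit.app Z) := by
  rintro _ _ _ ⟨A, B, k, -, ⟨e⟩⟩
  have := (adj.hasLiftingProperty_iff k (adj.counit.app Z)).2 inferInstance
  exact HasLiftingProperty.of_arrow_iso_left e _

lemma CategoryTheory.Adjunction.isIso_counit_app_of_llp {i : N ⥤ P} [i.Full] [i.Faithful]
    {u : P ⥤ N} (adj : i ⊣ u) (K : MorphismProperty N) {X : N} {Z : P} (g : i.obj X ⟶ Z)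
    (hg : llp (rlp (K.map i)) g) : IsIso (adj.counit.app Z) := by
  have := hg _ (adj.rlp_map_counit_app K Z)
  have sq : CommSq (i.map (adj.homEquiv X Z g)) g (adj.counit.app Z) (𝟙 Z) :=
    ⟨by simp [Adjunction.homEquiv_unit]⟩
  let _ : Coreflective i := { R := u, adj := adj }
  have : IsSplitEpi ((coreflectorAdjunction i).counit.app Z) :=
    ⟨⟨⟨sq.lift, sq.fac_right⟩⟩⟩
  exact adj.isIso_counit_app_iff_mem_essImage.2 mem_essImage_of_counit_isSplitEpi

lemma exists_factorization_of_map (i : N ⥤ P) [i.Full] [i.Faithful] {u : P ⥤ N}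
    (adj : i ⊣ u) (K : MorphismProperty N)
    (hfac : ∀ {X Y : P} (f : X ⟶ Y), ∃ (Z : P) (g : X ⟶ Z) (p : Z ⟶ Y),
      llp (rlp (K.map i)) g ∧ rlp (K.map i) p ∧ g ≫ p = f)
    {X Y : N} (f : X ⟶ Y) :
    ∃ (Z : N) (g : X ⟶ Z) (p : Z ⟶ Y), llp (rlp K) g ∧ rlp K p ∧ g ≫ p = f := by
  obtain ⟨Z, g, p, hg, hp, hgp⟩ := hfac (i.map f)
  have := adj.isIso_counit_app_of_llp K g hg
  let e : i.obj (u.obj Z) ≅ Z := asIso (adj.counit.app Z)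
  refine ⟨u.obj Z, i.preimage (g ≫ e.inv), i.preimage (e.hom ≫ p), ?_, ?_, ?_⟩
  · rw [llp_rlp_map_iff i adj, i.map_preimage]
    intro A B q hq
    have := hg q hq
    infer_instance
  · rw [rlp_map_iff i, i.map_preimage]
    intro A B k hk
    have := hp k hk
    infer_instance
  · exact i.map_injective (by simp [hgp])

lemma IsCellComplex.map (F : N ⥤ P) [PreservesColimitsOfSize.{v, v} F]
    (K : MorphismProperty N) {X Y : N} {f : X ⟶ Y} (hf : IsCellComplex.{v} K f) :
    IsCellComplex.{v} (K.map F) (F.map f) := by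
  obtain ⟨s⟩ := hf
  let _ := s.linOrd
  let _ := s.wellFounded
  let _ := s.orderBot
  let _ := s.succOrder
  refine ⟨⟨s.J, s.F ⋙ F, F.mapIso s.isoBot, F.mapCocone s.cocone,
    isColimitOfPreserves F s.isColimit, F.mapIso s.isoTop, by simp [s.fac], ?_, ?_⟩⟩
  · intro j hj
    obtain ⟨A, B, k, a, b, hk, hpo⟩ := s.succ_pushout j hj
    exact ⟨F.obj A, F.obj B, F.map k, F.map a, F.map b, K.map_mem_map F k hk, hpo.map F⟩
  · intro j hj
    obtain ⟨hc⟩ := s.smooth j hj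
    exact ⟨isColimitOfPreserves F hc⟩

lemma SeqSmallRel.of_map (F : N ⥤ P) [F.Full] [F.Faithful] [PreservesColimitsOfShape ℕ F]
    {K : MorphismProperty N} {L : MorphismProperty P} (hKL : K ≤ L.inverseImage F) {A : N}
    (h : SeqSmallRel (F.obj A) L) : SeqSmallRel A K := by
  intro G hG c hc
  obtain ⟨hexists, hunique⟩ :=
    h (G ⋙ F) (fun n => hKL _ (hG n)) (F.mapCocone c) (isColimitOfPreserves F hc)
  refine ⟨fun g => ?_, fun n h₁ h₂ hh => ?_⟩
  · obtain ⟨n, h', hh'⟩ := hexists (F.map g)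
    exact ⟨n, F.preimage h', F.map_injective (by simpa using hh')⟩
  · obtain ⟨m, le, hm⟩ :=
      hunique n (F.map h₁) (F.map h₂)
        (by simp only [Functor.mapCocone_ι_app, ← F.map_comp, hh])
    exact ⟨m, le, F.map_injective (by simpa using hm)⟩

lemma SeqSmallRel.isCellComplex_of_map (i : N ⥤ P) [i.Full] [i.Faithful] {u : P ⥤ N}
    (adj : i ⊣ u) (K : MorphismProperty N) {A : N}
    (h : SeqSmallRel (i.obj A) (IsCellComplex.{v} (K.map i))) :
    SeqSmallRel A (IsCellComplex.{v} K) :=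
  have := adj.isLeftAdjoint
  h.of_map i fun _ _ _ hf => hf.map i K

end Transfer

theorem statement2_general {N : Type u} {P : Type u'} [Category.{v} N] [Category.{v} P]
    (i : N ⥤ P) [i.Full] [i.Faithful] (u : P ⥤ N) (adj : i ⊣ u)
    (I J : MorphismProperty N) (W : MorphismProperty P)
    (hP : IsCofibrantlyGeneratedModel.{v} W (I.map i) (J.map i)) :
    IsCofibrantlyGeneratedModel.{v} (W.inverseImage i) I J ∧
      (∀ {X Y : N} (f : X ⟶ Y), rlp J f ↔ rlp (J.map i) (i.map f)) ∧
      (∀ {X Y : N} (f : X ⟶ Y), rlp I f ↔ rlp (I.map i) (i.map f)) := by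
  refine ⟨⟨?_, ?_, ?_, ?_, ?_, ?_, ?_, ?_, ?_, ?_⟩, rlp_map_iff i J, rlp_map_iff i I⟩
  · exact fun f g hf hg => by simpa using hP.two_of_three_comp _ _ hf hg
  · exact fun f g hg hfg => hP.two_of_three_left _ _ hg (by simpa using hfg)
  · exact fun f g hf hfg => hP.two_of_three_right _ _ hf (by simpa using hfg)
  · exact fun f g h => hP.retract _ _ (h.map i)
  · exact fun k hk => .isCellComplex_of_map i adj I (hP.small_I _ (I.map_mem_map i k hk))
  · exact fun k hk => .isCellComplex_of_map i adj J (hP.small_J _ (J.map_mem_map i k hk))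
  · intro X Y f
    rw [rlp_map_iff i I, rlp_map_iff i J, hP.rlp_I, MorphismProperty.inverseImage_iff]
  · intro X Y f
    rw [llp_rlp_map_iff i adj J, llp_rlp_map_iff i adj I, hP.llp_J,
      MorphismProperty.inverseImage_iff]
  · exact exists_factorization_of_map i adj I hP.fact_cof
  · exact exists_factorization_of_map i adj J hP.fact_acof

/-- Let `i : N → P` be the inclusion of a coreflective full subcategory,
with right adjoint `u`, both `N` and `P` bicomplete.  Suppose `I`, `J` are sets of
morphisms of `N` such that `P` is a cofibrantly generated model category with generating
cofibrations `iI`, generating acyclic cofibrations `iJ` and weak equivalences `W`.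
Then `N` admits a cofibrantly generated model structure with generating cofibrations `I`,
generating acyclic cofibrations `J`, weak equivalences `W ∩ N`; moreover its fibrations
(resp. acyclic fibrations) are exactly the morphisms of `N` which are fibrations
(resp. acyclic fibrations) in `P`. -/
theorem statement2 {N : Type u} {P : Type u'} [Category.{v} N] [Category.{v} P]
    [HasLimits N] [HasColimits N] [HasLimits P] [HasColimits P]
    (i : N ⥤ P) [i.Full] [i.Faithful] (u : P ⥤ N) (adj : i ⊣ u)
    (I J : MorphismProperty N) (W : MorphismProperty P)
    (hP : IsCofibrantlyGeneratedModel.{v} W (I.map i) (J.map i)) :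
    IsCofibrantlyGeneratedModel.{v} (W.inverseImage i) I J ∧
      (∀ {X Y : N} (f : X ⟶ Y), rlp J f ↔ rlp (J.map i) (i.map f)) ∧
      (∀ {X Y : N} (f : X ⟶ Y), rlp I f ↔ rlp (I.map i) (i.map f)) :=
  statement2_general i u adj I J W hP
end

section
/- Let (F₂, U₂) be a categorically well-behaved adjunction over sCat between categories N and P (each with forgetful functors U₁ : N → sCat, U₀ : P → sCat, with U₁ = U₀∘U₂). If f : X → Y is a morphism of N such that π₀U₀F₂(f) is an essentially surjective functor, then π₀U₁(f) is essentially surjective; and if π₀U₀F₂(f) is an isofibration, then π₀U₁(f) is an isofibration. -/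
/-! The unit square `f ≫ η_Y = η_X ≫ U₂(F₂ f)` commutes, and well-behavedness says that
`η_X` and `η_Y` are bijective both on objects and on isomorphisms of component categories.
Recast as properties of the induced maps on sets of isomorphisms, essential surjectivity
and the isofibration property of `U₂(F₂ f)` then transfer to `f` by a diagram chase in
that square. -/

open CategoryTheory Simplicial Opposite

noncomputable section

theorem List.set_get_self' {α} (l : List α) (i : Fin l.length) :
    l.set i (l.get i) = l := by
  apply List.ext_getElem (by simp)
  intro j h1 h2
  simp only [List.getElem_set]
  split
  · subst ‹_›; rfl
  · rfl

def IsWEq {X Y : SSet} (f : X ⟶ Y) : Prop :=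
  ∃ g : SSet.toTop.obj Y ⟶ SSet.toTop.obj X,
    ContinuousMap.Homotopic (SSet.toTop.map f ≫ g).hom (TopCat.Hom.hom (𝟙 (SSet.toTop.obj X))) ∧
    ContinuousMap.Homotopic (g ≫ SSet.toTop.map f).hom (TopCat.Hom.hom (𝟙 (SSet.toTop.obj Y)))

def IsKanFib {X Y : SSet} (f : X ⟶ Y) : Prop :=
  ∀ (n : ℕ) (i : Fin (n + 1)), HasLiftingProperty (SSet.horn n i).ι f

def edgeRel (X : SSet) (x y : X _⦋0⦌) : Prop :=
  ∃ e : X _⦋1⦌, X.δ 1 e = x ∧ X.δ 0 e = y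

def pi0 (X : SSet) : Type := Quot (edgeRel X)

def pi0Map {X Y : SSet} (f : X ⟶ Y) : pi0 X → pi0 Y :=
  Quot.lift (fun x => Quot.mk _ (f.app _ x)) (by
    rintro a b ⟨e, h1, h0⟩
    apply Quot.sound
    refine ⟨f.app _ e, ?_, ?_⟩
    · rw [← h1]; exact (NatTrans.naturality_apply f _ e).symm
    · rw [← h0]; exact (NatTrans.naturality_apply f _ e).symm)


/-- A (small) simplicially enriched category: objects, hom simplicial sets, identity
vertices, and a levelwise composition natural in the simplicial direction. -/
structure SCat where
  Obj : Type
  homS : Obj → Obj → SSet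
  unitS : ∀ a : Obj, (homS a a) _⦋0⦌
  compS : ∀ {a b c : Obj} (n : SimplexCategoryᵒᵖ),
    (homS a b).obj n → (homS b c).obj n → (homS a c).obj n
  compS_natural : ∀ {a b c : Obj} {n m : SimplexCategoryᵒᵖ} (φ : n ⟶ m)
    (x : (homS a b).obj n) (y : (homS b c).obj n),
    compS m ((homS a b).map φ x) ((homS b c).map φ y) =
      (homS a c).map φ (compS n x y)

/-- Simplicial functors between simplicially enriched categories. -/
structure SFun (C D : SCat) where
  obj : C.Obj → D.Obj
  map : ∀ a b : C.Obj, C.homS a b ⟶ D.homS (obj a) (obj b)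
  map_unit : ∀ a : C.Obj,
    (map a a).app (op (SimplexCategory.mk 0)) (C.unitS a) = D.unitS (obj a)
  map_comp : ∀ {a b c : C.Obj} (n : SimplexCategoryᵒᵖ)
    (x : (C.homS a b).obj n) (y : (C.homS b c).obj n),
    (map a c).app n (C.compS n x y) =
      D.compS n ((map a b).app n x) ((map b c).app n y)

namespace SFun

def id (C : SCat) : SFun C C where
  obj := _root_.id
  map a b := 𝟙 _
  map_unit a := rfl
  map_comp := by intros; rfl

def comp {C D E : SCat} (F : SFun C D) (G : SFun D E) : SFun C E where
  obj := G.obj ∘ F.obj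
  map a b := F.map a b ≫ G.map _ _
  map_unit a := by
    have h : (F.map a a ≫ G.map (F.obj a) (F.obj a)).app (op (SimplexCategory.mk 0))
          (C.unitS a) =
        (G.map (F.obj a) (F.obj a)).app (op (SimplexCategory.mk 0))
          ((F.map a a).app (op (SimplexCategory.mk 0)) (C.unitS a)) := rfl
    rw [h, F.map_unit, G.map_unit]
    rfl
  map_comp := by
    intro a b c n x y
    have h : ∀ {u v : C.Obj} (z : (C.homS u v).obj n),
        (F.map u v ≫ G.map (F.obj u) (F.obj v)).app n z =
          (G.map (F.obj u) (F.obj v)).app n ((F.map u v).app n z) := fun _ => rfl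
    rw [h, h, h, F.map_comp, G.map_comp]

end SFun

/-- A vertex of `C(a, b)` which becomes an isomorphism in the component category
`π₀ C`. -/
def SVertIso (C : SCat) {a b : C.Obj} (v : (C.homS a b) _⦋0⦌) : Prop :=
  ∃ w : (C.homS b a) _⦋0⦌,
    (Quot.mk (edgeRel _) (C.compS _ v w) : pi0 _) = Quot.mk _ (C.unitS a) ∧
    (Quot.mk (edgeRel _) (C.compS _ w v) : pi0 _) = Quot.mk _ (C.unitS b)

/-- The set of isomorphisms of the component category `π₀ C`: pairs of objects together
with a `π₀`-class of hom vertices which is invertible. -/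
def IsoTriple (C : SCat) : Type :=
  Σ' (a b : C.Obj), { q : pi0 (C.homS a b) // ∃ v, Quot.mk (edgeRel _) v = q ∧ SVertIso C v }

/-- The induced map on sets of isomorphisms of component categories. -/
def isoTripleMap {C D : SCat} (F : SFun C D) : IsoTriple C → IsoTriple D :=
  fun t =>
    ⟨F.obj t.1, F.obj t.2.1, pi0Map (F.map t.1 t.2.1) t.2.2.1, by
      obtain ⟨v, hv, w, hw1, hw2⟩ := t.2.2.2
      refine ⟨(F.map t.1 t.2.1).app _ v, by rw [← hv]; rfl, (F.map t.2.1 t.1).app _ w,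
        ?_, ?_⟩
      · have h1 := congrArg (pi0Map (F.map t.1 t.1)) hw1
        dsimp [pi0Map] at h1
        rw [F.map_comp, F.map_unit] at h1
        exact h1
      · have h2 := congrArg (pi0Map (F.map t.2.1 t.2.1)) hw2
        dsimp [pi0Map] at h2
        rw [F.map_comp, F.map_unit] at h2
        exact h2⟩

/-- `π₀ F` is essentially surjective. -/
def SCatEssSurj {C D : SCat} (F : SFun C D) : Prop :=
  ∀ b : D.Obj, ∃ (a : C.Obj) (h : (D.homS (F.obj a) b) _⦋0⦌), SVertIso D h

/-- `π₀ F` is an isofibration: isomorphisms of the target starting at an image object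
lift to isomorphisms of the source. -/
def SCatIsofib {C D : SCat} (F : SFun C D) : Prop :=
  ∀ (e : C.Obj) (b : D.Obj) (h : (D.homS (F.obj e) b) _⦋0⦌), SVertIso D h →
    ∃ (e' : C.Obj) (hc : F.obj e' = b) (g : (C.homS e e') _⦋0⦌),
      SVertIso C g ∧
        pi0Map (F.map e e') (Quot.mk _ g) =
          cast (show pi0 (D.homS (F.obj e) b) =
              pi0 (D.homS (F.obj e) (F.obj e')) by rw [hc])
            (Quot.mk (edgeRel _) h : pi0 (D.homS (F.obj e) b))

def IsoTriple.ofVert {C : SCat} {a b : C.Obj} {v : (C.homS a b) _⦋0⦌} (hv : SVertIso C v) :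
    IsoTriple C :=
  ⟨a, b, Quot.mk _ v, v, rfl, hv⟩

theorem isoTripleMap_comp {C D E : SCat} (F : SFun C D) (G : SFun D E) :
    isoTripleMap (F.comp G) = isoTripleMap G ∘ isoTripleMap F := by
  funext ⟨_, _, _, _, rfl, _⟩
  rfl

theorem isoTripleMap_ofVert {C D : SCat} (F : SFun C D) {a b : C.Obj}
    {v : (C.homS a b) _⦋0⦌} (hv : SVertIso C v)
    {w : (D.homS (F.obj a) (F.obj b)) _⦋0⦌} (hw : SVertIso D w)
    (hvw : pi0Map (F.map a b) (Quot.mk _ v) = Quot.mk _ w) :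
    isoTripleMap F (.ofVert hv) = .ofVert hw := by
  change (⟨F.obj a, F.obj b, pi0Map (F.map a b) (Quot.mk _ v), _⟩ : IsoTriple D) = ⟨_, _, _, _⟩
  congr

theorem sCatEssSurj_iff {C D : SCat} (F : SFun C D) :
    SCatEssSurj F ↔ ∀ b, ∃ t : IsoTriple D, t.1 ∈ Set.range F.obj ∧ t.2.1 = b := by
  constructor
  · intro hF b
    obtain ⟨a, h, hh⟩ := hF b
    exact ⟨.ofVert hh, ⟨a, rfl⟩, rfl⟩
  · intro hF b
    obtain ⟨⟨_, _, _, v, rfl, hv⟩, ⟨a, rfl⟩, rfl⟩ := hF b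
    exact ⟨a, v, hv⟩

theorem sCatIsofib_iff {C D : SCat} (F : SFun C D) :
    SCatIsofib F ↔ ∀ (e : C.Obj) (t : IsoTriple D), t.1 = F.obj e →
      ∃ s : IsoTriple C, s.1 = e ∧ isoTripleMap F s = t := by
  constructor
  · rintro hF e ⟨_, b, _, h, rfl, hh⟩ rfl
    obtain ⟨e', rfl, g, hg, hgh⟩ := hF e b h hh
    exact ⟨.ofVert hg, rfl, isoTripleMap_ofVert F hg hh hgh⟩
  · intro hF e b h hh
    obtain ⟨⟨_, e', _, g, rfl, hg⟩, rfl, hs⟩ := hF e (.ofVert hh) rfl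
    simp only [IsoTriple.ofVert, isoTripleMap] at hs
    injection hs with _ hs
    injection hs with hb hs
    subst hb
    refine ⟨e', rfl, g, hg, ?_⟩
    exact congrArg Subtype.val (eq_of_heq hs)

section Square

variable {A B C D : SCat} {F : SFun A B} {G : SFun C D} {H : SFun A C} {K : SFun B D}

theorem SCatEssSurj.of_comp_eq (hsq : F.comp K = H.comp G) (hH : Function.Surjective H.obj)
    (hK : Function.Injective K.obj) (hiK : Function.Surjective (isoTripleMap K))
    (hG : SCatEssSurj G) : SCatEssSurj F := by
  rw [sCatEssSurj_iff] at hG ⊢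
  intro b
  obtain ⟨t', ⟨c, hc⟩, ht'b⟩ := hG (K.obj b)
  obtain ⟨a, rfl⟩ := hH c
  obtain ⟨t, rfl⟩ := hiK t'
  have hKFa : K.obj (F.obj a) = G.obj (H.obj a) := congrFun (congrArg SFun.obj hsq) a
  exact ⟨t, ⟨a, hK (hKFa.trans hc)⟩, hK ht'b⟩

theorem SCatIsofib.of_comp_eq (hsq : F.comp K = H.comp G) (hH : Function.Injective H.obj)
    (hiH : Function.Surjective (isoTripleMap H)) (hiK : Function.Injective (isoTripleMap K))
    (hG : SCatIsofib G) : SCatIsofib F := by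
  rw [sCatIsofib_iff] at hG ⊢
  intro e t hte
  have hKFe : K.obj (F.obj e) = G.obj (H.obj e) := congrFun (congrArg SFun.obj hsq) e
  obtain ⟨s', hs'e, hs't⟩ := hG (H.obj e) (isoTripleMap K t) (by rw [← hKFe, ← hte]; rfl)
  obtain ⟨s, rfl⟩ := hiH s'
  refine ⟨s, hH hs'e, hiK ?_⟩
  calc isoTripleMap K (isoTripleMap F s)
      = isoTripleMap G (isoTripleMap H s) := by
        rw [← Function.comp_apply (f := isoTripleMap K), ← isoTripleMap_comp, hsq,
          isoTripleMap_comp, Function.comp_apply]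
    _ = isoTripleMap K t := hs't

end Square

-- `U₁` is given by its action on objects and morphisms and `U₀ = U₂ ⋙ U₁`,
-- so `π₀U₀F₂(f)` is `π₀U₁(U₂(F₂ f))`.
/-- Proposition `categorically well-behaved prop`.  Let `(F₂, U₂)`
be an adjunction over `sCat` between `N` and `P`: `F₂ ⊣ U₂`, with `U₁ : N → sCat` the
forgetful functor (given here by its action on objects and morphisms, compatible with
composition), and `U₀ = U₂ ⋙ U₁`, so that `π₀U₀F₂(f) = π₀U₁(U₂(F₂(f)))`.  Assume the
adjunction is *categorically well-behaved*: (1) `π₀U₁(η_X)` is the identity on objects,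
and (2) it induces a bijection on the sets of isomorphisms of the component categories.
Then if `π₀U₀F₂(f)` is essentially surjective so is `π₀U₁(f)`, and if `π₀U₀F₂(f)` is an
isofibration so is `π₀U₁(f)`. -/
theorem statement13 {N P : Type*} [Category N] [Category P]
    (F₂ : N ⥤ P) (U₂ : P ⥤ N) (adj : F₂ ⊣ U₂)
    (U₁o : N → SCat) (U₁m : ∀ {X Y : N}, (X ⟶ Y) → SFun (U₁o X) (U₁o Y))
    (hfunc : ∀ {X Y Z : N} (f : X ⟶ Y) (g : Y ⟶ Z),
      U₁m (f ≫ g) = (U₁m f).comp (U₁m g))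
    (hwb1 : ∀ X : N, ∃ h : (U₁o X).Obj = (U₁o (U₂.obj (F₂.obj X))).Obj,
      (U₁m (adj.unit.app X)).obj = cast h)
    (hwb2 : ∀ X : N, Function.Bijective (isoTripleMap (U₁m (adj.unit.app X))))
    {X Y : N} (f : X ⟶ Y) :
    (SCatEssSurj (U₁m (U₂.map (F₂.map f))) → SCatEssSurj (U₁m f)) ∧
    (SCatIsofib (U₁m (U₂.map (F₂.map f))) → SCatIsofib (U₁m f)) := by
  have hsq : (U₁m f).comp (U₁m (adj.unit.app Y)) =
      (U₁m (adj.unit.app X)).comp (U₁m (U₂.map (F₂.map f))) := by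
    rw [← hfunc, ← hfunc]
    exact congrArg U₁m (adj.unit.naturality f)
  have hη : ∀ Z, Function.Bijective (U₁m (adj.unit.app Z)).obj := fun Z => by
    obtain ⟨h, hηZ⟩ := hwb1 Z
    exact hηZ ▸ cast_bijective h
  exact ⟨SCatEssSurj.of_comp_eq hsq (hη X).2 (hη Y).1 (hwb2 Y).2,
    SCatIsofib.of_comp_eq hsq (hη X).1 (hwb2 X).2 (hwb2 Y).1⟩
end
end
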